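/- arXiv:1702.04258 — 4 statements merged into one kernel-verified Lean document; each statement's English description precedes it below -/
import Mathlib

section
/- The function (β, e, l) ↦ l · log(1 + h·(β·U/l + F_d(e/l) − P_C)) is jointly concave on the domain where l > 0, β, e ≥ 0 and β·U/l + F_d(e/l) − P_C ≥ 0, provided F_d is concave and h, U > 0, P_C ≥ 0. -/
lemma log_concave_pair (s t y1 y2 : ℝ) (hs : 0 ≤ s) (ht : 0 ≤ t) (hst : s + t = 1)
    (hy1 : 0 < y1) (hy2 : 0 < y2) :
    s * Real.log y1 + t * Real.log y2 ≤ Real.log (s * y1 + t * y2) := by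
  have := strictConcaveOn_log_Ioi.concaveOn.2 (Set.mem_Ioi.2 hy1) (Set.mem_Ioi.2 hy2) hs ht hst
  simpa [smul_eq_mul] using this

set_option maxHeartbeats 2000000 in
/-- Joint concavity of `(β, e, l) ↦ l * log (1 + h * (β * U / l + F_d (e / l) - P_C))`
on the domain `l > 0`, `β, e ≥ 0`, `β * U / l + F_d (e / l) - P_C ≥ 0`,
where `F_d` is concave, `h, U > 0` and `P_C ≥ 0`. -/
theorem stmt_3 (Fd : ℝ → ℝ) (hFd : ConcaveOn ℝ Set.univ Fd)
    (h U PC : ℝ) (hh : 0 < h) (hU : 0 < U) (hPC : 0 ≤ PC) :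
    ConcaveOn ℝ
      {p : ℝ × ℝ × ℝ | 0 < p.2.2 ∧ 0 ≤ p.1 ∧ 0 ≤ p.2.1 ∧
        0 ≤ p.1 * U / p.2.2 + Fd (p.2.1 / p.2.2) - PC}
      (fun p : ℝ × ℝ × ℝ =>
        p.2.2 * Real.log (1 + h * (p.1 * U / p.2.2 + Fd (p.2.1 / p.2.2) - PC))) := by
  -- key inequality
  have key : ∀ β1 e1 l1 β2 e2 l2 a b : ℝ, 0 < l1 → 0 < l2 → 0 ≤ a → 0 ≤ b → a + b = 1 →
      (a*l1/(a*l1+b*l2)) * (β1*U/l1 + Fd (e1/l1) - PC)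
        + (b*l2/(a*l1+b*l2)) * (β2*U/l2 + Fd (e2/l2) - PC)
        ≤ (a*β1+b*β2)*U/(a*l1+b*l2) + Fd ((a*e1+b*e2)/(a*l1+b*l2)) - PC := by
    intro β1 e1 l1 β2 e2 l2 a b hl1 hl2 ha hb hab
    have hl : 0 < a*l1+b*l2 := by
      rcases ha.lt_or_eq with ha' | ha'
      · positivity
      · have hb1 : b = 1 := by linarith
        rw [← ha', hb1]; simpa using hl2
    set s := a*l1/(a*l1+b*l2) with hs_def
    set t := b*l2/(a*l1+b*l2) with ht_def
    have hs : 0 ≤ s := by positivity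
    have ht : 0 ≤ t := by positivity
    have hst : s + t = 1 := by rw [hs_def, ht_def, ← add_div, div_self hl.ne']
    have hβ : (a*β1+b*β2)*U/(a*l1+b*l2) = s*(β1*U/l1) + t*(β2*U/l2) := by
      rw [hs_def, ht_def]; field_simp [hl.ne']
    have he : (a*e1+b*e2)/(a*l1+b*l2) = s*(e1/l1) + t*(e2/l2) := by
      rw [hs_def, ht_def]; field_simp [hl.ne']
    have hFd' : s * Fd (e1/l1) + t * Fd (e2/l2) ≤ Fd (s*(e1/l1) + t*(e2/l2)) := by
      have := hFd.2 (Set.mem_univ (e1/l1)) (Set.mem_univ (e2/l2)) hs ht hst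
      simpa [smul_eq_mul] using this
    rw [hβ, he]
    clear_value s t
    nlinarith [hFd']
  have hlpos : ∀ a b l1 l2 : ℝ, 0 < l1 → 0 < l2 → 0 ≤ a → 0 ≤ b → a + b = 1 →
      (0:ℝ) < a*l1+b*l2 := by
    intro a b l1 l2 hl1 hl2 ha hb hab
    rcases ha.lt_or_eq with ha' | ha'
    · positivity
    · have hb1 : b = 1 := by linarith
      rw [← ha', hb1]; simpa using hl2
  constructor
  · -- convexity of the set
    rintro ⟨β1, e1, l1⟩ ⟨hl1, hβ1, he1, hx1⟩ ⟨β2, e2, l2⟩ ⟨hl2, hβ2, he2, hx2⟩ a b ha hb hab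
    have hl := hlpos a b l1 l2 hl1 hl2 ha hb hab
    have hk := key β1 e1 l1 β2 e2 l2 a b hl1 hl2 ha hb hab
    have hs : 0 ≤ a*l1/(a*l1+b*l2) := by positivity
    have ht : 0 ≤ b*l2/(a*l1+b*l2) := by positivity
    simp only [Set.mem_setOf_eq] at hx1 hx2 ⊢
    refine ⟨?_, ?_, ?_, ?_⟩ <;>
      simp only [Prod.smul_mk, Prod.mk_add_mk, smul_eq_mul]
    · exact hl
    · positivity
    · positivity
    · nlinarith [mul_nonneg hs hx1, mul_nonneg ht hx2]
  · rintro ⟨β1, e1, l1⟩ ⟨hl1, hβ1, he1, hx1⟩ ⟨β2, e2, l2⟩ ⟨hl2, hβ2, he2, hx2⟩ a b ha hb hab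
    have hl := hlpos a b l1 l2 hl1 hl2 ha hb hab
    have hk := key β1 e1 l1 β2 e2 l2 a b hl1 hl2 ha hb hab
    set s := a*l1/(a*l1+b*l2) with hs_def
    set t := b*l2/(a*l1+b*l2) with ht_def
    have hs : 0 ≤ s := by positivity
    have ht : 0 ≤ t := by positivity
    have hst : s + t = 1 := by rw [hs_def, ht_def, ← add_div, div_self hl.ne']
    have hls : (a*l1+b*l2) * s = a * l1 := by
      rw [hs_def]; field_simp
    have hlt : (a*l1+b*l2) * t = b * l2 := by
      rw [ht_def]; field_simp
    set x1 := β1*U/l1 + Fd (e1/l1) - PC with hx1_def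
    set x2 := β2*U/l2 + Fd (e2/l2) - PC with hx2_def
    set X := (a*β1+b*β2)*U/(a*l1+b*l2) + Fd ((a*e1+b*e2)/(a*l1+b*l2)) - PC with hX_def
    show a • ((fun p : ℝ × ℝ × ℝ =>
        p.2.2 * Real.log (1 + h * (p.1 * U / p.2.2 + Fd (p.2.1 / p.2.2) - PC))) (β1, e1, l1))
      + b • ((fun p : ℝ × ℝ × ℝ =>
        p.2.2 * Real.log (1 + h * (p.1 * U / p.2.2 + Fd (p.2.1 / p.2.2) - PC)))
          (β2, e2, l2)) ≤ _
    simp only [Prod.smul_mk, Prod.mk_add_mk, smul_eq_mul]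
    rw [← hx1_def, ← hx2_def, ← hX_def]
    clear_value s t x1 x2 X
    clear hx1_def hx2_def hX_def hs_def ht_def
    have hy1 : (0:ℝ) < 1 + h*x1 := by nlinarith
    have hy2 : (0:ℝ) < 1 + h*x2 := by nlinarith
    have hlog := log_concave_pair s t _ _ hs ht hst hy1 hy2
    have h1 : s * 1 ≤ s*(1+h*x1) := by
      apply mul_le_mul_of_nonneg_left _ hs
      nlinarith
    have h2 : t * 1 ≤ t*(1+h*x2) := by
      apply mul_le_mul_of_nonneg_left _ ht
      nlinarith
    have hcomb : (0:ℝ) < s*(1+h*x1) + t*(1+h*x2) := by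
      have : s * 1 + t * 1 = 1 := by rw [mul_one, mul_one, hst]
      linarith
    have hmono : Real.log (s*(1+h*x1) + t*(1+h*x2)) ≤ Real.log (1 + h*X) := by
      apply Real.log_le_log hcomb
      have heq : s*(1+h*x1) + t*(1+h*x2) = (s+t) + h*(s*x1+t*x2) := by ring
      rw [heq, hst]
      have := mul_le_mul_of_nonneg_left hk hh.le
      linarith
    calc a * (l1 * Real.log (1+h*x1)) + b * (l2 * Real.log (1+h*x2))
        = (a*l1+b*l2) * (s * Real.log (1+h*x1) + t * Real.log (1+h*x2)) := by
          linear_combination (-Real.log (1+h*x1)) * hls + (-Real.log (1+h*x2)) * hlt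
      _ ≤ (a*l1+b*l2) * Real.log (s*(1+h*x1) + t*(1+h*x2)) :=
          mul_le_mul_of_nonneg_left hlog hl.le
      _ ≤ _ := mul_le_mul_of_nonneg_left hmono hl.le
end

section
/- Convexity of total power in rates for superposition coding: the function (R_1,…,R_N) ↦ Σ_{i=1}^N s_i (e^{R_i} − 1) Π_{l=1}^{i−1} e^{R_l}, for s_1 > s_2 > … > s_N > 0 and R_i ≥ 0, is convex. Equivalently, rewriting via telescoping, it equals Σ_{i=1}^N (s_i − s_{i+1}) e^{Σ_{j=1}^i R_j} − s_1 (with s_{N+1}=0), which is convex as a nonnegative combination of exponentials of linear functions. -/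
/-!
Since `(e^{R_i} - 1) ∏_{l<i} e^{R_l} = e^{R_0 + ⋯ + R_i} - e^{R_0 + ⋯ + R_{i-1}}`, summation by parts
turns the power into `∑_i (s_i - s_{i+1}) e^{R_0 + ⋯ + R_i} - s_0`. The coefficients are
nonnegative because `s` decreases, and each term is the exponential of a linear form, hence convex.
-/

open Finset Real

theorem ConvexOn.sum {𝕜 E β ι : Type*} [Semiring 𝕜] [PartialOrder 𝕜] [AddCommMonoid E]
    [AddCommMonoid β] [PartialOrder β] [IsOrderedAddMonoid β] [SMul 𝕜 E] [Module 𝕜 β]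
    {s : Set E} (hs : Convex 𝕜 s) (t : Finset ι) {f : ι → E → β}
    (hf : ∀ i ∈ t, ConvexOn 𝕜 s (f i)) :
    ConvexOn 𝕜 s fun x => ∑ i ∈ t, f i x := by
  classical
  induction t using Finset.induction with
  | empty => simpa using convexOn_const 0 hs
  | insert a t ha ih =>
    simp only [sum_insert ha]
    exact (hf a (mem_insert_self a t)).add (ih fun i hi => hf i (mem_insert_of_mem hi))

theorem convexOn_exp_comp_linearMap {E : Type*} [AddCommMonoid E] [Module ℝ E]
    (ℓ : E →ₗ[ℝ] ℝ) : ConvexOn ℝ Set.univ fun x => exp (ℓ x) := by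
  simpa [Function.comp_def] using convexOn_exp.comp_linearMap ℓ

theorem convexOn_exp_sum_range (n : ℕ) :
    ConvexOn ℝ Set.univ fun R : ℕ → ℝ => exp (∑ j ∈ range n, R j) := by
  simpa using convexOn_exp_comp_linearMap (∑ j ∈ range n, LinearMap.proj (R := ℝ) j)

theorem sum_mul_exp_sub_one_mul_prod_exp (s R : ℕ → ℝ) (M : ℕ) :
    ∑ i ∈ range M, s i * (exp (R i) - 1) * ∏ l ∈ range i, exp (R l) =
      ∑ i ∈ range M, (s i - s (i + 1)) * exp (∑ j ∈ range (i + 1), R j)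
        - s 0 + s M * exp (∑ j ∈ range M, R j) := by
  induction M with
  | zero => simp
  | succ M ih =>
    rw [sum_range_succ, ih, sum_range_succ, ← exp_sum, sum_range_succ R, exp_add]
    ring

theorem stmt_10_general (N : ℕ) (s : ℕ → ℝ)
    (hsN : s N = 0)
    (hdec : ∀ i j : ℕ, i < j → j ≤ N → s j < s i) :
    ConvexOn ℝ {R : ℕ → ℝ | ∀ i, 0 ≤ R i}
      (fun R : ℕ → ℝ =>
        ∑ i ∈ range N, s i * (Real.exp (R i) - 1) *
          ∏ l ∈ range i, Real.exp (R l)) ∧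
    (∀ R : ℕ → ℝ,
      ∑ i ∈ range N, s i * (Real.exp (R i) - 1) * ∏ l ∈ range i, Real.exp (R l) =
        ∑ i ∈ range N, (s i - s (i + 1)) * Real.exp (∑ j ∈ range (i + 1), R j)
          - s 0) := by
  have htelescope : ∀ R : ℕ → ℝ,
      ∑ i ∈ range N, s i * (exp (R i) - 1) * ∏ l ∈ range i, exp (R l) =
        ∑ i ∈ range N, (s i - s (i + 1)) * exp (∑ j ∈ range (i + 1), R j) - s 0 := by
    intro R
    rw [sum_mul_exp_sub_one_mul_prod_exp, hsN, zero_mul, add_zero]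
  refine ⟨?_, htelescope⟩
  have hcoeff : ∀ i ∈ range N, 0 ≤ s i - s (i + 1) := fun i hi =>
    sub_nonneg.2 (hdec i (i + 1) i.lt_succ_self (mem_range.1 hi)).le
  have hconvex : ConvexOn ℝ Set.univ fun R : ℕ → ℝ =>
      ∑ i ∈ range N, (s i - s (i + 1)) * exp (∑ j ∈ range (i + 1), R j) - s 0 :=
    (ConvexOn.sum convex_univ _ fun i hi =>
      (convexOn_exp_sum_range (i + 1)).smul (hcoeff i hi)).sub (concaveOn_const _ convex_univ)
  rw [funext htelescope]
  exact hconvex.subset (Set.subset_univ _) (convex_Ici (0 : ℕ → ℝ))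

open Finset in
/-- Convexity of the total superposition-coding power as a function of the rates:
with `s 0 > s 1 > … > s (N-1) > 0` and `s N = 0` (playing the role of
`s_{N+1} = 0`), the function
`R ↦ ∑_{i<N} s i * (exp (R i) - 1) * ∏_{l<i} exp (R l)` is convex on the
nonnegative orthant, and equals
`∑_{i<N} (s i - s (i+1)) * exp (∑_{j ≤ i} R j) - s 0`. -/
theorem stmt_10 (N : ℕ) (s : ℕ → ℝ)
    (hsN : s N = 0)
    (hdec : ∀ i j : ℕ, i < j → j ≤ N → s j < s i)
    (hpos : ∀ i : ℕ, i < N → 0 < s i) :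
    ConvexOn ℝ {R : ℕ → ℝ | ∀ i, 0 ≤ R i}
      (fun R : ℕ → ℝ =>
        ∑ i ∈ range N, s i * (Real.exp (R i) - 1) *
          ∏ l ∈ range i, Real.exp (R l)) ∧
    (∀ R : ℕ → ℝ,
      ∑ i ∈ range N, s i * (Real.exp (R i) - 1) * ∏ l ∈ range i, Real.exp (R l) =
        ∑ i ∈ range N, (s i - s (i + 1)) * Real.exp (∑ j ∈ range (i + 1), R j)
          - s 0) :=
  stmt_10_general N s hsN hdec
end

section
/- Monotone optimal powers imply full battery depletion at change points: let R : ℝ≥0 → ℝ be strictly concave and increasing, and consider maximizing Σ_{k=1}^K R(P_k) subject to energy causality Σ_{j=1}^k (P_j − U_j)τ ≤ B_0 for all k and P_k ≥ 0. Then the optimal sequence satisfies P_1* ≤ P_2* ≤ … ≤ P_K*, and for any k with P_k* < P_{k+1}*, the causality constraint at k is tight: Σ_{j=1}^k (P_j* − U_j)τ = B_0. -/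
lemma aux_concave_transfer {R : ℝ → ℝ} (hconc : StrictConcaveOn ℝ (Set.Ici (0 : ℝ)) R)
    {a b e : ℝ} (ha : 0 ≤ a) (he : 0 < e) (hab : a + e ≤ b - e) :
    R a + R b < R (a + e) + R (b - e) := by
  have hd : 0 < b - a := by linarith
  set t : ℝ := (b - a - e) / (b - a) with ht
  have ht0 : 0 < t := by apply div_pos <;> linarith
  have ht1 : 0 < 1 - t := by
    rw [ht, sub_pos, div_lt_one hd]; linarith
  have hax : a ∈ Set.Ici (0 : ℝ) := ha
  have hbx : b ∈ Set.Ici (0 : ℝ) := by simp only [Set.mem_Ici]; linarith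
  have hne : a ≠ b := by intro h; rw [h] at hab; linarith
  have h1 := hconc.2 hax hbx hne ht0 ht1 (by ring)
  have h2 := hconc.2 hax hbx hne ht1 ht0 (by ring)
  have e1 : t • a + (1 - t) • b = a + e := by
    simp only [smul_eq_mul, ht]; field_simp; ring
  have e2 : (1 - t) • a + t • b = b - e := by
    simp only [smul_eq_mul, ht]; field_simp; ring
  rw [e1] at h1
  rw [e2] at h2
  simp only [smul_eq_mul] at h1 h2
  nlinarith [h1, h2]

open Finset in
/-- Monotone optimal powers and battery depletion at change points (Lemma 3):
for strictly concave increasing `R`, an optimal solution of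
`max ∑_{k=1}^K R (P k)` subject to energy causality
`∑_{j=1}^k (P j - U j) τ ≤ B₀` (for all `k ≤ K`) and `P k ≥ 0` is
nondecreasing, and whenever `P k < P (k+1)` the causality constraint at `k`
is tight. -/
theorem stmt_16 (K : ℕ) (τ B0 : ℝ) (hτ : 0 < τ) (hB0 : 0 ≤ B0)
    (U : ℕ → ℝ) (hU : ∀ k, 1 ≤ k → k ≤ K → 0 ≤ U k)
    (R : ℝ → ℝ)
    (hconc : StrictConcaveOn ℝ (Set.Ici (0 : ℝ)) R)
    (hmono : StrictMonoOn R (Set.Ici (0 : ℝ)))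
    (P : ℕ → ℝ)
    (hfeas : (∀ k ∈ Finset.Icc 1 K, 0 ≤ P k) ∧
      ∀ k ∈ Finset.Icc 1 K, ∑ j ∈ Finset.Icc 1 k, (P j - U j) * τ ≤ B0)
    (hopt : ∀ Q : ℕ → ℝ,
      ((∀ k ∈ Finset.Icc 1 K, 0 ≤ Q k) ∧
        ∀ k ∈ Finset.Icc 1 K, ∑ j ∈ Finset.Icc 1 k, (Q j - U j) * τ ≤ B0) →
      ∑ k ∈ Finset.Icc 1 K, R (Q k) ≤ ∑ k ∈ Finset.Icc 1 K, R (P k)) :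
    (∀ k, 1 ≤ k → k < K → P k ≤ P (k + 1)) ∧
    (∀ k, 1 ≤ k → k < K → P k < P (k + 1) →
      ∑ j ∈ Finset.Icc 1 k, (P j - U j) * τ = B0) := by
  obtain ⟨hPnn, hPcaus⟩ := hfeas
  -- Key perturbation inequality
  have key : ∀ k, 1 ≤ k → k < K → ∀ e : ℝ, 0 ≤ P k + e → 0 ≤ P (k + 1) - e →
      e * τ ≤ B0 - ∑ j ∈ Finset.Icc 1 k, (P j - U j) * τ →
      R (P k + e) + R (P (k + 1) - e) ≤ R (P k) + R (P (k + 1)) := by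
    intro k hk1 hkK e henn1 henn2 hecaus
    set Q : ℕ → ℝ := fun j => if j = k then P k + e else if j = k + 1 then P (k + 1) - e else P j
      with hQ
    have hkne : k ≠ k + 1 := by omega
    have hQk : Q k = P k + e := by simp [hQ]
    have hQk1 : Q (k + 1) = P (k + 1) - e := by simp [hQ, hkne.symm]
    have hmemk : k ∈ Finset.Icc 1 K := by simp; omega
    have hmemk1 : k + 1 ∈ Finset.Icc 1 K := by simp; omega
    have hptfe : ∀ j, (Q j - U j) * τ =
        (P j - U j) * τ + ((if j = k then e * τ else 0) + (if j = k + 1 then -(e * τ) else 0)) := by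
      intro j
      by_cases h1 : j = k
      · subst h1; simp [hQ, hkne]; ring
      · by_cases h2 : j = k + 1
        · subst h2; simp [hQ, hkne.symm, h1]; ring
        · simp [hQ, h1, h2]
    have hfeQ : (∀ j ∈ Finset.Icc 1 K, 0 ≤ Q j) ∧
        ∀ j ∈ Finset.Icc 1 K, ∑ i ∈ Finset.Icc 1 j, (Q i - U i) * τ ≤ B0 := by
      constructor
      · intro j hj
        by_cases h1 : j = k
        · subst h1; rw [hQk]; exact henn1
        · by_cases h2 : j = k + 1
          · subst h2; rw [hQk1]; exact henn2
          · simpa [hQ, h1, h2] using hPnn j hj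
      · intro i hi
        have hsum : ∑ j ∈ Finset.Icc 1 i, (Q j - U j) * τ =
            ∑ j ∈ Finset.Icc 1 i, (P j - U j) * τ +
              ((if k ∈ Finset.Icc 1 i then e * τ else 0) +
               (if k + 1 ∈ Finset.Icc 1 i then -(e * τ) else 0)) := by
          rw [Finset.sum_congr rfl (fun j _ => hptfe j), Finset.sum_add_distrib,
            Finset.sum_add_distrib, Finset.sum_ite_eq' (Finset.Icc 1 i) k fun _ => e * τ,
            Finset.sum_ite_eq' (Finset.Icc 1 i) (k + 1) fun _ => -(e * τ)]
        rw [hsum]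
        simp only [Finset.mem_Icc] at hi ⊢
        by_cases hk1i : k + 1 ≤ i
        · have : k ≤ i := by omega
          simp only [if_pos (by omega : 1 ≤ k ∧ k ≤ i), if_pos (by omega : 1 ≤ k + 1 ∧ k + 1 ≤ i)]
          have := hPcaus i (by simp; omega)
          linarith
        · by_cases hki : k ≤ i
          · have hik : i = k := by omega
            simp only [if_pos (by omega : 1 ≤ k ∧ k ≤ i),
              if_neg (by omega : ¬(1 ≤ k + 1 ∧ k + 1 ≤ i))]
            rw [hik]
            linarith
          · simp only [if_neg (by omega : ¬(1 ≤ k ∧ k ≤ i)),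
              if_neg (by omega : ¬(1 ≤ k + 1 ∧ k + 1 ≤ i))]
            have := hPcaus i (by simp; omega)
            linarith
    have hobj : ∑ j ∈ Finset.Icc 1 K, R (Q j) =
        ∑ j ∈ Finset.Icc 1 K, R (P j) +
          ((R (P k + e) - R (P k)) + (R (P (k + 1) - e) - R (P (k + 1)))) := by
      have hpt : ∀ j, R (Q j) = R (P j) +
          ((if j = k then R (P k + e) - R (P k) else 0) +
           (if j = k + 1 then R (P (k + 1) - e) - R (P (k + 1)) else 0)) := by
        intro j
        by_cases h1 : j = k
        · subst h1; simp [hQ, hkne]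
        · by_cases h2 : j = k + 1
          · subst h2; simp [hQ, hkne.symm, h1]
          · simp [hQ, h1, h2]
      rw [Finset.sum_congr rfl (fun j _ => hpt j), Finset.sum_add_distrib,
        Finset.sum_add_distrib,
        Finset.sum_ite_eq' (Finset.Icc 1 K) k fun _ => R (P k + e) - R (P k),
        Finset.sum_ite_eq' (Finset.Icc 1 K) (k + 1) fun _ => R (P (k + 1) - e) - R (P (k + 1))]
      rw [if_pos hmemk, if_pos hmemk1]
    have := hopt Q hfeQ
    rw [hobj] at this
    linarith
  have part1 : ∀ k, 1 ≤ k → k < K → P k ≤ P (k + 1) := by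
    intro k hk1 hkK
    by_contra hlt
    push_neg at hlt
    set e : ℝ := (P (k + 1) - P k) / 2 with he
    have hP1nn : 0 ≤ P (k + 1) := hPnn (k + 1) (by simp; omega)
    have hPknn : 0 ≤ P k := hPnn k (by simp; omega)
    have hkey := key k hk1 hkK e (by rw [he]; linarith) (by rw [he]; linarith)
      (by
        have := hPcaus k (by simp; omega)
        have : e * τ ≤ 0 := by
          apply mul_nonpos_of_nonpos_of_nonneg
          · rw [he]; linarith
          · linarith
        linarith)
    have hcc := aux_concave_transfer hconc hP1nn (e := -e)
      (by rw [he]; linarith) (b := P k) (by rw [he]; linarith)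
    have h1 : P (k + 1) + -e = P k + e := by rw [he]; ring
    have h2 : P k - -e = P (k + 1) - e := by rw [he]; ring
    rw [h1, h2] at hcc
    linarith
  refine ⟨part1, ?_⟩
  intro k hk1 hkK hlt
  by_contra hne
  have hle := hPcaus k (by simp; omega)
  have hstrict : ∑ j ∈ Finset.Icc 1 k, (P j - U j) * τ < B0 := lt_of_le_of_ne hle hne
  set e : ℝ := min ((B0 - ∑ j ∈ Finset.Icc 1 k, (P j - U j) * τ) / τ) ((P (k + 1) - P k) / 2)
    with he
  have hPknn : 0 ≤ P k := hPnn k (by simp; omega)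
  have he0 : 0 < e := by
    rw [he]
    apply lt_min
    · exact div_pos (by linarith) hτ
    · linarith
  have hehalf : e ≤ (P (k + 1) - P k) / 2 := min_le_right _ _
  have hkey := key k hk1 hkK e (by linarith) (by linarith)
    (by
      have h1 : e ≤ (B0 - ∑ j ∈ Finset.Icc 1 k, (P j - U j) * τ) / τ := min_le_left _ _
      rw [le_div_iff₀ hτ] at h1
      linarith)
  have hcc := aux_concave_transfer hconc hPknn he0 (b := P (k + 1)) (by linarith)
  linarith
end

section
/- Exchange argument for non-monotone power schedules: if R is strictly concave and P_k > P_{k+1} in a feasible schedule for the energy-causality-constrained problem, then replacing both by their average P̄ = (P_k + P_{k+1})/2 remains feasible (energy causality is preserved since the cumulative consumption at every prefix weakly decreases or stays equal at times ≥ k+1 and the constraint at k involved the larger P_k) and strictly increases R(P_k) + R(P_{k+1}) < 2R(P̄). -/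
open Finset

lemma StrictConcaveOn.add_lt_two_mul_map_midpoint {s : Set ℝ} {f : ℝ → ℝ}
    (hf : StrictConcaveOn ℝ s f) {x y : ℝ} (hx : x ∈ s) (hy : y ∈ s) (hxy : x ≠ y) :
    f x + f y < 2 * f ((x + y) / 2) := by
  have h := hf.2 hx hy hxy (show (0 : ℝ) < 1 / 2 by norm_num) (show (0 : ℝ) < 1 / 2 by norm_num)
    (by norm_num)
  simp only [smul_eq_mul] at h
  rw [show (1 / 2 : ℝ) * x + 1 / 2 * y = (x + y) / 2 by ring] at h
  linarith

noncomputable def averageAdjacent (P : ℕ → ℝ) (k : ℕ) : ℕ → ℝ :=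
  fun m => if m = k ∨ m = k + 1 then (P k + P (k + 1)) / 2 else P m

lemma averageAdjacent_nonneg {s : Finset ℕ} {P : ℕ → ℝ} {k : ℕ} (hk : k ∈ s) (hk' : k + 1 ∈ s)
    (hP : ∀ j ∈ s, 0 ≤ P j) {j : ℕ} (hj : j ∈ s) : 0 ≤ averageAdjacent P k j := by
  unfold averageAdjacent
  split_ifs
  · linarith [hP k hk, hP (k + 1) hk']
  · exact hP j hj

lemma averageAdjacent_sub (P : ℕ → ℝ) (k i : ℕ) :
    averageAdjacent P k i - P i =
      (P k - P (k + 1)) / 2 * ((if i = k + 1 then 1 else 0) - if i = k then 1 else 0) := by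
  unfold averageAdjacent
  split_ifs <;> subst_vars <;> first | omega | ring

-- Averaging moves consumption from slot `k` to the later slot `k + 1`, so every
-- prefix loses at least as much as it gains.
lemma sum_Icc_averageAdjacent_sub_nonpos {P : ℕ → ℝ} {k : ℕ} (hk : 1 ≤ k)
    (hP : P (k + 1) ≤ P k) (j : ℕ) :
    ∑ i ∈ Icc 1 j, (averageAdjacent P k i - P i) ≤ 0 := by
  simp_rw [averageAdjacent_sub, ← mul_sum, sum_sub_distrib, sum_ite_eq', mem_Icc]
  refine mul_nonpos_of_nonneg_of_nonpos (by linarith) ?_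
  split_ifs <;> norm_num
  omega

lemma sum_Icc_averageAdjacent_energy_le {P : ℕ → ℝ} {k : ℕ} (hk : 1 ≤ k)
    (hP : P (k + 1) ≤ P k) (U : ℕ → ℝ) {τ : ℝ} (hτ : 0 ≤ τ) (j : ℕ) :
    ∑ i ∈ Icc 1 j, (averageAdjacent P k i - U i) * τ ≤ ∑ i ∈ Icc 1 j, (P i - U i) * τ := by
  have hsplit : ∑ i ∈ Icc 1 j, (averageAdjacent P k i - U i) * τ =
      ∑ i ∈ Icc 1 j, (P i - U i) * τ + (∑ i ∈ Icc 1 j, (averageAdjacent P k i - P i)) * τ := by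
    rw [sum_mul, ← sum_add_distrib]
    exact sum_congr rfl fun i _ => by ring
  rw [hsplit]
  linarith [mul_nonpos_of_nonpos_of_nonneg (sum_Icc_averageAdjacent_sub_nonpos hk hP j) hτ]

open Finset in
/-- Exchange argument: if a feasible schedule has `P (k+1) < P k`, replacing
both by their average `P̄ = (P k + P (k+1)) / 2` preserves feasibility of the
energy-causality constraints and strictly increases `R (P k) + R (P (k+1))`
when `R` is strictly concave. -/
theorem stmt_17 (K : ℕ) (τ B0 : ℝ) (hτ : 0 < τ) (U : ℕ → ℝ)
    (R : ℝ → ℝ) (hconc : StrictConcaveOn ℝ (Set.Ici (0 : ℝ)) R)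
    (P : ℕ → ℝ) (k : ℕ) (hk1 : 1 ≤ k) (hkK : k + 1 ≤ K)
    (hdec : P (k + 1) < P k)
    (hfeas : (∀ j ∈ Finset.Icc 1 K, 0 ≤ P j) ∧
      ∀ j ∈ Finset.Icc 1 K, ∑ i ∈ Finset.Icc 1 j, (P i - U i) * τ ≤ B0) :
    (∀ j ∈ Finset.Icc 1 K,
        0 ≤ (fun m => if m = k ∨ m = k + 1 then (P k + P (k + 1)) / 2 else P m) j) ∧
    (∀ j ∈ Finset.Icc 1 K,
        ∑ i ∈ Finset.Icc 1 j,
          ((fun m => if m = k ∨ m = k + 1 then (P k + P (k + 1)) / 2 else P m) i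
            - U i) * τ ≤ B0) ∧
    R (P k) + R (P (k + 1)) < 2 * R ((P k + P (k + 1)) / 2) := by
  obtain ⟨hnonneg, henergy⟩ := hfeas
  have hk : k ∈ Icc 1 K := mem_Icc.2 ⟨hk1, by omega⟩
  have hk' : k + 1 ∈ Icc 1 K := mem_Icc.2 ⟨by omega, hkK⟩
  refine ⟨fun j hj => averageAdjacent_nonneg hk hk' hnonneg hj,
    fun j hj => (sum_Icc_averageAdjacent_energy_le hk1 hdec.le U hτ.le j).trans (henergy j hj), ?_⟩
  exact hconc.add_lt_two_mul_map_midpoint (hnonneg k hk) (hnonneg (k + 1) hk') hdec.ne'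
end
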